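/- arXiv:1911.07106 — 2 statements merged into one kernel-verified Lean document; each statement's English description precedes it below -/
import Mathlib

section
/- Suppose connection probabilities decay exponentially: P(A_ij = 1 | ‖ρ_i − ρ_j‖ = r) ≤ c₁ e^{−c₂ r} for constants c₁, c₂ > 0, where positions ρ_i = ω_n ρ̃_i with ρ̃_1,…,ρ̃_n i.i.d. with density f on ℝ^d bounded above by f̄, and ω_n = (n/κ)^{1/d}. Then the expected degree of any agent is bounded: E[Σ_{j≠i} A_ij] ≤ C for a constant C independent of n. -/
open MeasureTheory

lemma exp_decay_le (d : ℕ) {c : ℝ} (hc : 0 < c) {t : ℝ} (ht : 0 ≤ t) :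
    Real.exp (-(c * t)) ≤ (Real.exp c * (d+1).factorial / c ^ (d+1)) * (1 + t) ^ (-((d:ℝ)+1)) := by
  have h1t : (0:ℝ) < 1 + t := by linarith
  have hpow : (1 + t) ^ (-((d:ℝ)+1)) = ((1+t)^(d+1))⁻¹ := by
    rw [← Real.rpow_natCast (1+t) (d+1), ← Real.rpow_neg h1t.le]
    push_cast; ring_nf
  have h1 : (c*(1+t)) ^ (d+1) / (d+1).factorial ≤ Real.exp (c*(1+t)) :=
    Real.pow_div_factorial_le_exp _ (by positivity) _
  rw [div_le_iff₀ (by positivity)] at h1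
  have key : (1+t)^(d+1) * c^(d+1) ≤ Real.exp c * (d+1).factorial * Real.exp (c*t) := by
    calc (1+t)^(d+1) * c^(d+1) = (c*(1+t))^(d+1) := by rw [mul_pow]; ring
    _ ≤ Real.exp (c*(1+t)) * (d+1).factorial := h1
    _ = Real.exp c * (d+1).factorial * Real.exp (c*t) := by
        rw [show c*(1+t) = c + c*t by ring, Real.exp_add]; ring
  have h3 : (Real.exp c * (d+1).factorial / c ^ (d+1)) * ((1+t)^(d+1))⁻¹
      = (Real.exp c * (d+1).factorial) / (c^(d+1) * (1+t)^(d+1)) := by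
    field_simp
  rw [hpow, h3, Real.exp_neg, inv_eq_one_div,
    div_le_div_iff₀ (Real.exp_pos _) (by positivity)]
  nlinarith [key]

lemma exp_decay_integrable (d : ℕ) {c : ℝ} (hc : 0 < c) :
    Integrable (fun x : EuclideanSpace ℝ (Fin d) => Real.exp (-(c * ‖x‖))) := by
  have hd : (Module.finrank ℝ (EuclideanSpace ℝ (Fin d)) : ℝ) < (d:ℝ)+1 := by
    simp [finrank_euclideanSpace_fin]
  have hint : Integrable (fun x : EuclideanSpace ℝ (Fin d) =>
      (Real.exp c * (d+1).factorial / c ^ (d+1)) * (1 + ‖x‖) ^ (-((d:ℝ)+1))) :=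
    (integrable_one_add_norm hd).const_mul _
  refine hint.mono ?_ (ae_of_all _ fun x => ?_)
  · exact (Real.measurable_exp.comp ((measurable_norm.const_mul c).neg)).aestronglyMeasurable
  · rw [Real.norm_eq_abs, abs_of_nonneg (Real.exp_pos _).le, Real.norm_eq_abs,
      abs_of_nonneg (by positivity)]
    exact exp_decay_le d hc (norm_nonneg x)

/-- If connection probabilities decay exponentially,
`P(A_ij = 1 | ρ_i, ρ_j) ≤ c₁ exp(−c₂ ω_n ‖ρ̃_i − ρ̃_j‖)` with `ω_n = (n/κ)^{1/d}`,
and positions `ρ̃_i` are i.i.d. with density bounded by `f̄` (so that the law of any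
difference `ρ̃_i − ρ̃_j`, `i ≠ j`, is bounded by `f̄ · Lebesgue`), then the expected
degree of any agent is bounded by a constant `C` independent of `n`. -/
theorem expected_degree_bounded
    (d : ℕ) (hd : 1 ≤ d) (κ c₁ c₂ fbar : ℝ)
    (hκ : 0 < κ) (hc₁ : 0 < c₁) (hc₂ : 0 < c₂) (hf : 0 < fbar) :
    ∃ C : ℝ, ∀ (n : ℕ), 0 < n →
      ∀ (Ω : Type) (mΩ : MeasurableSpace Ω) (μ : Measure Ω),
        IsProbabilityMeasure μ →
      ∀ (ρ : Fin n → Ω → EuclideanSpace ℝ (Fin d))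
        (A : Fin n → Fin n → Ω → ℝ),
        (∀ i, Measurable (ρ i)) →
        (∀ i j, Measurable (A i j)) →
        (∀ i j ω, A i j ω = 0 ∨ A i j ω = 1) →
        (∀ i j, i ≠ j →
          Measure.map (fun ω => ρ i ω - ρ j ω) μ ≤ (ENNReal.ofReal fbar) • volume) →
        (∀ i j, i ≠ j →
          μ[A i j | MeasurableSpace.comap (fun ω => (ρ i ω, ρ j ω)) inferInstance]
            ≤ᵐ[μ] fun ω =>
              c₁ * Real.exp (-(c₂ * (((n : ℝ) / κ) ^ ((1 : ℝ) / d)) *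
                ‖ρ i ω - ρ j ω‖))) →
        ∀ i, ∫ ω, ∑ j ∈ Finset.univ.erase i, A i j ω ∂μ ≤ C := by
  set J : ℝ := ∫ x : EuclideanSpace ℝ (Fin d), Real.exp (-(c₂ * ‖x‖)) with hJdef
  have hJ : 0 ≤ J := integral_nonneg fun x => (Real.exp_pos _).le
  refine ⟨c₁ * fbar * κ * J, ?_⟩
  intro n hn Ω mΩ μ hμ ρ A hρ hA h01 hmap hcond i
  set ωn : ℝ := ((n : ℝ) / κ) ^ ((1 : ℝ) / d) with hωdef
  have hnpos : (0:ℝ) < (n:ℝ) := by exact_mod_cast hn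
  have hω : 0 < ωn := Real.rpow_pos_of_pos (by positivity) _
  have hωd : ωn ^ d = (n:ℝ) / κ := by
    rw [hωdef, ← Real.rpow_natCast _ d, ← Real.rpow_mul (by positivity), one_div,
      inv_mul_cancel₀ (show (d:ℝ) ≠ 0 by positivity), Real.rpow_one]
  -- integrability of each A i j
  have hAint : ∀ j, Integrable (A i j) μ := by
    intro j
    refine (integrable_const (1:ℝ)).mono' (hA i j).aestronglyMeasurable (ae_of_all _ fun ω => ?_)
    rcases h01 i j ω with h | h <;> simp [h]
  rw [integral_finset_sum _ (fun j _ => hAint j)]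
  -- bound each term
  have key : ∀ j ∈ Finset.univ.erase i, ∫ ω, A i j ω ∂μ ≤ c₁ * fbar * κ * J / n := by
    intro j hj
    have hij : i ≠ j := (Finset.ne_of_mem_erase hj).symm
    have hφ : Measurable fun ω => ρ i ω - ρ j ω := (hρ i).sub (hρ j)
    -- the bounding function
    set g : Ω → ℝ := fun ω => c₁ * Real.exp (-(c₂ * ωn * ‖ρ i ω - ρ j ω‖)) with hgdef
    have hgmeas : Measurable g :=
      (Real.measurable_exp.comp ((hφ.norm.const_mul (c₂ * ωn)).neg)).const_mul c₁
    have hgint : Integrable g μ := by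
      refine (integrable_const c₁).mono' hgmeas.aestronglyMeasurable (ae_of_all _ fun ω => ?_)
      have h1 : Real.exp (-(c₂ * ωn * ‖ρ i ω - ρ j ω‖)) ≤ 1 :=
        Real.exp_le_one_iff.2 (neg_nonpos.2 (by positivity))
      have h2 : ‖g ω‖ = c₁ * Real.exp (-(c₂ * ωn * ‖ρ i ω - ρ j ω‖)) := by
        rw [hgdef, Real.norm_eq_abs, abs_of_nonneg (by positivity)]
      rw [h2]
      exact mul_le_of_le_one_right hc₁.le h1
    have hm : MeasurableSpace.comap (fun ω => (ρ i ω, ρ j ω)) inferInstance ≤ mΩ :=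
      measurable_iff_comap_le.1 ((hρ i).prodMk (hρ j))
    have step1 : ∫ ω, A i j ω ∂μ
        = ∫ ω, (μ[A i j | MeasurableSpace.comap (fun ω => (ρ i ω, ρ j ω)) inferInstance]) ω ∂μ :=
      (integral_condExp hm (f := A i j)).symm
    have step2 : ∫ ω, (μ[A i j |
        MeasurableSpace.comap (fun ω => (ρ i ω, ρ j ω)) inferInstance]) ω ∂μ ≤ ∫ ω, g ω ∂μ :=
      integral_mono_ae integrable_condExp hgint (hcond i j hij)
    -- push to the pushforward measure
    set g' : EuclideanSpace ℝ (Fin d) → ℝ := fun x => c₁ * Real.exp (-(c₂ * ωn * ‖x‖)) with hg'def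
    have hg'meas : Measurable g' :=
      (Real.measurable_exp.comp ((measurable_norm.const_mul (c₂ * ωn)).neg)).const_mul c₁
    have hg'nonneg : ∀ x, 0 ≤ g' x := fun x => by positivity
    have step3 : ∫ ω, g ω ∂μ = ∫ x, g' x ∂(Measure.map (fun ω => ρ i ω - ρ j ω) μ) :=
      (integral_map hφ.aemeasurable hg'meas.aestronglyMeasurable).symm
    -- integrability of g' wrt volume
    have hg'int : Integrable g' := by
      have := (exp_decay_integrable d (mul_pos hc₂ hω)).const_mul c₁
      simpa [hg'def, mul_assoc] using this
    -- step 4 : bound by fbar times Lebesgue integral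
    have step4 : ∫ x, g' x ∂(Measure.map (fun ω => ρ i ω - ρ j ω) μ)
        ≤ fbar * ∫ x, g' x := by
      set ν := Measure.map (fun ω => ρ i ω - ρ j ω) μ with hν
      have h4 : ∫ x, g' x ∂ν = (∫⁻ x, ENNReal.ofReal (g' x) ∂ν).toReal :=
        integral_eq_lintegral_of_nonneg_ae (ae_of_all _ hg'nonneg)
          hg'meas.aestronglyMeasurable
      have h7 : ∫⁻ x, ENNReal.ofReal (g' x) = ENNReal.ofReal (∫ x, g' x) :=
        (ofReal_integral_eq_lintegral_ofReal hg'int (ae_of_all _ hg'nonneg)).symm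
      have h5 : ∫⁻ x, ENNReal.ofReal (g' x) ∂ν
          ≤ ENNReal.ofReal fbar * ENNReal.ofReal (∫ x, g' x) := by
        calc ∫⁻ x, ENNReal.ofReal (g' x) ∂ν
            ≤ ∫⁻ x, ENNReal.ofReal (g' x) ∂((ENNReal.ofReal fbar) • volume) :=
              lintegral_mono' (hmap i j hij) le_rfl
          _ = ENNReal.ofReal fbar * ∫⁻ x, ENNReal.ofReal (g' x) := lintegral_smul_measure _ _
          _ = ENNReal.ofReal fbar * ENNReal.ofReal (∫ x, g' x) := by rw [h7]
      rw [h4]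
      calc (∫⁻ x, ENNReal.ofReal (g' x) ∂ν).toReal
          ≤ (ENNReal.ofReal fbar * ENNReal.ofReal (∫ x, g' x)).toReal :=
            ENNReal.toReal_mono (by finiteness) h5
        _ = fbar * ∫ x, g' x := by
            rw [← ENNReal.ofReal_mul hf.le, ENNReal.toReal_ofReal
              (mul_nonneg hf.le (integral_nonneg hg'nonneg))]
    -- step 5 : change of variables
    have step5 : ∫ x, g' x = c₁ * ((κ / n) * J) := by
      have hcomp : ∀ x : EuclideanSpace ℝ (Fin d),
          g' x = c₁ * (fun y : EuclideanSpace ℝ (Fin d) => Real.exp (-(c₂ * ‖y‖))) (ωn • x) := by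
        intro x
        simp only [hg'def, norm_smul, Real.norm_eq_abs, abs_of_nonneg hω.le]
        ring_nf
      calc ∫ x, g' x
          = c₁ * ∫ x : EuclideanSpace ℝ (Fin d),
              (fun y : EuclideanSpace ℝ (Fin d) => Real.exp (-(c₂ * ‖y‖))) (ωn • x) := by
            simp_rw [hcomp]; rw [integral_const_mul]
        _ = c₁ * ((ωn ^ Module.finrank ℝ (EuclideanSpace ℝ (Fin d)))⁻¹ • J) := by
            rw [Measure.integral_comp_smul_of_nonneg volume
              (fun y : EuclideanSpace ℝ (Fin d) => Real.exp (-(c₂ * ‖y‖))) ωn (hR := hω.le)]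
        _ = c₁ * ((κ / n) * J) := by
            rw [finrank_euclideanSpace_fin, hωd, smul_eq_mul, inv_div]
    calc ∫ ω, A i j ω ∂μ ≤ fbar * (c₁ * ((κ / n) * J)) := by
          rw [step1]
          refine step2.trans ?_
          rw [step3]
          exact step4.trans (le_of_eq (by rw [step5]))
      _ = c₁ * fbar * κ * J / n := by field_simp
  calc ∑ j ∈ Finset.univ.erase i, ∫ ω, A i j ω ∂μ
      ≤ ∑ _j ∈ Finset.univ.erase i, c₁ * fbar * κ * J / n := Finset.sum_le_sum key
    _ = (Finset.univ.erase i).card • (c₁ * fbar * κ * J / n) := by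
        rw [Finset.sum_const]
    _ ≤ n * (c₁ * fbar * κ * J / n) := by
        rw [nsmul_eq_mul]
        have hcard : ((Finset.univ.erase i).card : ℝ) ≤ n := by
          rw [Finset.card_erase_of_mem (Finset.mem_univ i), Finset.card_univ, Fintype.card_fin]
          exact_mod_cast Nat.sub_le n 1
        exact mul_le_mul_of_nonneg_right hcard (by positivity)
    _ = c₁ * fbar * κ * J := by field_simp
end

section
/- Exponential tail of neighborhood radius from exponential tail of set size and link lengths: suppose for all n ≥ ñ, (i) P(|J_x| > r) ≤ b₁ e^{−b₂ r^{ε₁}}, and (ii) the probability that any single link in A spans spatial distance greater than r is at most c₁ e^{−c₂ r}. Then there exist a₁, a₂, ε₂ > 0 such that P(max_{p∈J_x} ‖x − p‖ > r) ≤ a₁ e^{−a₂ r^{ε₂}}. -/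
open MeasureTheory

/-- Exponential tail of the neighborhood radius from an exponential tail of the set
size and of link lengths: if for all `n ≥ ñ` (i) `P(|J_x| > r) ≤ b₁ e^{−b₂ r^{ε₁}}`,
(ii) every point of `J_x` is a.s. reachable from `x` by a chain of at most `|J_x|`
links, and (iii) the probability that any single link spans spatial distance greater
than `r` is at most `c₁ e^{−c₂ r}`, then there exist `a₁, a₂, ε₂ > 0` with
`P(max_{p ∈ J_x} ‖x − p‖ > r) ≤ a₁ e^{−a₂ r^{ε₂}}` for all `n ≥ ñ`. -/
theorem radius_exponential_tail
    {Ω : Type*} [MeasurableSpace Ω] {E : Type*} [MetricSpace E]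
    (μ : ℕ → Measure Ω) (hprob : ∀ n, IsProbabilityMeasure (μ n))
    (x : E) (J : ℕ → Ω → Finset E) (links : ℕ → Ω → Finset (E × E))
    (ntilde : ℕ) (b₁ b₂ ε₁ c₁ c₂ : ℝ)
    (hb₁ : 0 < b₁) (hb₂ : 0 < b₂) (hε₁ : 0 < ε₁) (hc₁ : 0 < c₁) (hc₂ : 0 < c₂)
    (hJ : ∀ n, ntilde ≤ n → ∀ r : ℝ, 0 < r →
      μ n {ω | r < ((J n ω).card : ℝ)}
        ≤ ENNReal.ofReal (b₁ * Real.exp (-(b₂ * r ^ ε₁))))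
    (hpath : ∀ n, ntilde ≤ n → ∀ᵐ ω ∂(μ n), ∀ p ∈ J n ω,
      ∃ k : ℕ, k ≤ (J n ω).card ∧ ∃ f : ℕ → E, f 0 = x ∧ f k = p ∧
        ∀ i < k, (f i, f (i + 1)) ∈ links n ω)
    (hlink : ∀ n, ntilde ≤ n → ∀ r : ℝ, 0 < r →
      μ n {ω | ∃ e ∈ links n ω, r < dist e.1 e.2}
        ≤ ENNReal.ofReal (c₁ * Real.exp (-(c₂ * r)))) :
    ∃ a₁ a₂ ε₂ : ℝ, 0 < a₁ ∧ 0 < a₂ ∧ 0 < ε₂ ∧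
      ∀ n, ntilde ≤ n → ∀ r : ℝ, 0 < r →
        μ n {ω | ∃ p ∈ J n ω, r < dist x p}
          ≤ ENNReal.ofReal (a₁ * Real.exp (-(a₂ * r ^ ε₂))) := by

  classical
  set ε₂ : ℝ := min ε₁ 1 / 2 with hε₂def
  have hε₂ : 0 < ε₂ := by
    have : 0 < min ε₁ 1 := lt_min hε₁ one_pos
    positivity
  set a₂ : ℝ := min b₂ c₂ with ha₂def
  have ha₂ : 0 < a₂ := lt_min hb₂ hc₂
  set a₁ : ℝ := (b₁ + c₁ + 1) * Real.exp a₂ with ha₁def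
  have ha₁ : 0 < a₁ := by positivity
  refine ⟨a₁, a₂, ε₂, ha₁, ha₂, hε₂, ?_⟩
  intro n hn r hr
  have hprobn := hprob n
  by_cases hr1 : r < 1
  · -- small r : bound the probability by 1
    have h1 : (1 : ℝ) ≤ a₁ * Real.exp (-(a₂ * r ^ ε₂)) := by
      have hrε : r ^ ε₂ ≤ 1 := Real.rpow_le_one hr.le hr1.le hε₂.le
      have h2 : a₂ * r ^ ε₂ ≤ a₂ := by nlinarith [Real.rpow_nonneg hr.le ε₂]
      have h3 : Real.exp (-a₂) ≤ Real.exp (-(a₂ * r ^ ε₂)) := by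
        apply Real.exp_le_exp.2; linarith
      have h4 : a₁ * Real.exp (-a₂) ≤ a₁ * Real.exp (-(a₂ * r ^ ε₂)) :=
        mul_le_mul_of_nonneg_left h3 ha₁.le
      have h5 : a₁ * Real.exp (-a₂) = b₁ + c₁ + 1 := by
        rw [ha₁def, mul_assoc, ← Real.exp_add, add_neg_cancel, Real.exp_zero, mul_one]
      nlinarith
    calc μ n {ω | ∃ p ∈ J n ω, r < dist x p} ≤ 1 := prob_le_one
      _ = ENNReal.ofReal 1 := by simp
      _ ≤ ENNReal.ofReal (a₁ * Real.exp (-(a₂ * r ^ ε₂))) := ENNReal.ofReal_le_ofReal h1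
  · push_neg at hr1
    have hs : 0 < Real.sqrt r := Real.sqrt_pos.2 hr
    -- a.s. inclusion of events
    have hsub : ({ω | ∃ p ∈ J n ω, r < dist x p} : Set Ω) ≤ᵐ[μ n]
        (({ω | Real.sqrt r < ((J n ω).card : ℝ)} ∪
         {ω | ∃ e ∈ links n ω, Real.sqrt r < dist e.1 e.2} : Set Ω)) := by
      filter_upwards [hpath n hn] with ω hω hA
      obtain ⟨p, hp, hdp⟩ := hA
      rcases lt_or_ge (Real.sqrt r) ((J n ω).card : ℝ) with hc | hcard
      · exact Set.mem_union_left _ hc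
      refine Set.mem_union_right _ ?_
      by_contra hno
      simp only [Set.mem_setOf_eq] at hno
      push_neg at hno
      exfalso
      have hlinks : ∀ e ∈ links n ω, dist e.1 e.2 ≤ Real.sqrt r := hno
      obtain ⟨k, hk, f, hf0, hfk, hfl⟩ := hω p hp
      have hchain : dist (f 0) (f k) ≤ ∑ i ∈ Finset.range k, dist (f i) (f (i + 1)) :=
        dist_le_range_sum_dist f k
      have hterm : ∀ i ∈ Finset.range k, dist (f i) (f (i + 1)) ≤ Real.sqrt r := by
        intro i hi
        have := hlinks (f i, f (i + 1)) (hfl i (Finset.mem_range.1 hi))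
        simpa using this
      have hsum : ∑ i ∈ Finset.range k, dist (f i) (f (i + 1)) ≤ k * Real.sqrt r := by
        calc ∑ i ∈ Finset.range k, dist (f i) (f (i + 1))
            ≤ ∑ _i ∈ Finset.range k, Real.sqrt r := Finset.sum_le_sum hterm
          _ = k * Real.sqrt r := by simp [mul_comm]
      have hkr : (k : ℝ) ≤ Real.sqrt r := by
        calc (k : ℝ) ≤ ((J n ω).card : ℝ) := by exact_mod_cast hk
          _ ≤ Real.sqrt r := hcard
      have : dist x p ≤ r := by
        calc dist x p = dist (f 0) (f k) := by rw [hf0, hfk]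
          _ ≤ ∑ i ∈ Finset.range k, dist (f i) (f (i + 1)) := hchain
          _ ≤ k * Real.sqrt r := hsum
          _ ≤ Real.sqrt r * Real.sqrt r := mul_le_mul_of_nonneg_right hkr hs.le
          _ = r := Real.mul_self_sqrt hr.le
      linarith
    have hB := hJ n hn (Real.sqrt r) hs
    have hC := hlink n hn (Real.sqrt r) hs
    have hmain : μ n {ω | ∃ p ∈ J n ω, r < dist x p}
        ≤ ENNReal.ofReal (b₁ * Real.exp (-(b₂ * Real.sqrt r ^ ε₁)))
          + ENNReal.ofReal (c₁ * Real.exp (-(c₂ * Real.sqrt r))) := by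
      calc μ n {ω | ∃ p ∈ J n ω, r < dist x p}
          ≤ μ n ({ω | Real.sqrt r < ((J n ω).card : ℝ)} ∪
              {ω | ∃ e ∈ links n ω, Real.sqrt r < dist e.1 e.2}) := measure_mono_ae hsub
        _ ≤ μ n {ω | Real.sqrt r < ((J n ω).card : ℝ)}
              + μ n {ω | ∃ e ∈ links n ω, Real.sqrt r < dist e.1 e.2} := measure_union_le _ _
        _ ≤ _ := add_le_add hB hC
    refine hmain.trans ?_
    rw [← ENNReal.ofReal_add (by positivity) (by positivity)]
    apply ENNReal.ofReal_le_ofReal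
    -- real number estimate for r ≥ 1
    have hεle1 : ε₂ ≤ ε₁ / 2 := by
      rw [hε₂def]; gcongr; exact min_le_left _ _
    have hεle2 : ε₂ ≤ 1 / 2 := by
      rw [hε₂def]; gcongr; exact min_le_right _ _
    have hsqrt_rpow : Real.sqrt r = r ^ ((1:ℝ)/2) := Real.sqrt_eq_rpow r
    have h1 : r ^ ε₂ ≤ Real.sqrt r ^ ε₁ := by
      rw [hsqrt_rpow, ← Real.rpow_mul hr.le]
      exact Real.rpow_le_rpow_of_exponent_le hr1 (by linarith)
    have h2 : r ^ ε₂ ≤ Real.sqrt r := by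
      rw [hsqrt_rpow]
      exact Real.rpow_le_rpow_of_exponent_le hr1 (by linarith)
    have hrpos : 0 ≤ r ^ ε₂ := Real.rpow_nonneg hr.le ε₂
    have e1 : Real.exp (-(b₂ * Real.sqrt r ^ ε₁)) ≤ Real.exp (-(a₂ * r ^ ε₂)) := by
      apply Real.exp_le_exp.2
      have : a₂ * r ^ ε₂ ≤ b₂ * Real.sqrt r ^ ε₁ :=
        mul_le_mul (min_le_left _ _) h1 hrpos hb₂.le
      linarith
    have e2 : Real.exp (-(c₂ * Real.sqrt r)) ≤ Real.exp (-(a₂ * r ^ ε₂)) := by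
      apply Real.exp_le_exp.2
      have : a₂ * r ^ ε₂ ≤ c₂ * Real.sqrt r :=
        mul_le_mul (min_le_right _ _) h2 hrpos hc₂.le
      linarith
    have hexp1 : (1:ℝ) ≤ Real.exp a₂ := Real.one_le_exp ha₂.le
    have hexppos : 0 < Real.exp (-(a₂ * r ^ ε₂)) := Real.exp_pos _
    calc b₁ * Real.exp (-(b₂ * Real.sqrt r ^ ε₁)) + c₁ * Real.exp (-(c₂ * Real.sqrt r))
        ≤ b₁ * Real.exp (-(a₂ * r ^ ε₂)) + c₁ * Real.exp (-(a₂ * r ^ ε₂)) := by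
          gcongr
      _ = (b₁ + c₁) * Real.exp (-(a₂ * r ^ ε₂)) := by ring
      _ ≤ ((b₁ + c₁ + 1) * Real.exp a₂) * Real.exp (-(a₂ * r ^ ε₂)) := by
          have hcoef : b₁ + c₁ ≤ (b₁ + c₁ + 1) * Real.exp a₂ := by nlinarith
          exact mul_le_mul_of_nonneg_right hcoef hexppos.le
      _ = a₁ * Real.exp (-(a₂ * r ^ ε₂)) := by rw [ha₁def]
end
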